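/- arXiv:1905.04922 — 2 statements merged into one kernel-verified Lean document; each statement's English description precedes it below -/
import Mathlib

section
/- For every real x ≠ 0 one has −i·Log(−i·tanh(x − iπ/4)) = −π·sign(x) + π/2 − 2·arctan(e^{−2x}), where Log denotes the principal branch of the complex logarithm and sign(x) = 1 for x > 0 and −1 for x < 0; i.e., the one-particle momentum p satisfies p(x − iπ/4) = −π sign(x) + π/2 − 2 arctan(e^{−2x}) and in particular is real on the line Im λ = −π/4 away from x = 0. -/
/-!
Put `v = e^{-2x}`. Since `e^{-2(x - iπ/4)} = i v`, we get
`tanh (x - iπ/4) = (1 - i v) / (1 + i v) = e^{-2i arctan v}`, hence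
`-i tanh (x - iπ/4) = exp (i (-π/2 - 2 arctan v))`. As `arctan v < π/4` exactly when `x > 0`, this
exponent lies in `(-π, π)` for `x > 0`, and after adding `2π` it does so for `x < 0`; on that strip
`Log` inverts `exp`.
-/

open Real

namespace Complex

theorem ofReal_ne_I (x : ℝ) : (x : ℂ) ≠ I := fun h => by simpa using congrArg im h

theorem ofReal_ne_neg_I (x : ℝ) : (x : ℂ) ≠ -I := fun h => by simpa using congrArg im h

theorem exp_two_mul_arctan_mul_I {z : ℂ} (h₁ : z ≠ I) (h₂ : z ≠ -I) :
    exp (2 * (arctan z * I)) = (1 + z * I) / (1 - z * I) := by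
  have hnum : 1 + z * I ≠ 0 := by
    contrapose! h₁
    linear_combination (-I) * h₁ + z * I_mul_I
  have hden : 1 - z * I ≠ 0 := by
    contrapose! h₂
    linear_combination I * h₂ + z * I_mul_I
  rw [arctan, show 2 * (-I / 2 * log ((1 + z * I) / (1 - z * I)) * I)
      = -(I * I) * log ((1 + z * I) / (1 - z * I)) by ring, I_mul_I, neg_neg, one_mul,
    exp_log (div_ne_zero hnum hden)]

theorem tanh_eq_one_sub_exp_div_one_add_exp (z : ℂ) :
    tanh z = (1 - exp (-2 * z)) / (1 + exp (-2 * z)) := by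
  rw [tanh_eq_sinh_div_cosh, sinh, cosh, div_div_div_cancel_right₀ two_ne_zero,
    ← mul_div_mul_right _ _ (exp_ne_zero (-z))]
  congr 1 <;> simp only [sub_mul, add_mul, ← exp_add] <;> ring_nf <;> simp

theorem tanh_ofReal_sub_pi_div_four_mul_I (x : ℝ) :
    tanh (x - I * π / 4) = (1 - rexp (-2 * x) * I) / (1 + rexp (-2 * x) * I) := by
  have : exp (-2 * (x - I * π / 4)) = rexp (-2 * x) * I := by
    rw [show -2 * ((x : ℂ) - I * π / 4) = ((-2 * x : ℝ) : ℂ) + π / 2 * I by push_cast; ring,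
      exp_add, exp_pi_div_two_mul_I, ofReal_exp]
  rw [tanh_eq_one_sub_exp_div_one_add_exp, this]

theorem neg_I_mul_tanh_ofReal_sub_pi_div_four_mul_I (x : ℝ) :
    -I * tanh (x - I * π / 4) = exp ((-(π / 2) - 2 * Real.arctan (rexp (-2 * x))) * I) := by
  rw [tanh_ofReal_sub_pi_div_four_mul_I, ← exp_neg_pi_div_two_mul_I]
  generalize rexp (-2 * x) = v
  have h := exp_two_mul_arctan_mul_I (ofReal_ne_I (-v)) (ofReal_ne_neg_I (-v))
  rw [← ofReal_arctan, Real.arctan_neg] at h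
  simp only [ofReal_neg, neg_mul, sub_neg_eq_add, ← sub_eq_add_neg] at h
  rw [← h, ← exp_add]
  ring_nf

end Complex

noncomputable def lowerLineMomentum (x : ℝ) : ℝ :=
  -π * Real.sign x + π / 2 - 2 * Real.arctan (rexp (-2 * x))

theorem lowerLineMomentum_mem_Ioo {x : ℝ} (hx : x ≠ 0) :
    lowerLineMomentum x ∈ Set.Ioo (-π) π := by
  have hθ : 0 < Real.arctan (rexp (-2 * x)) := Real.arctan_pos.2 (Real.exp_pos _)
  have hθ' := Real.arctan_lt_pi_div_two (rexp (-2 * x))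
  rcases hx.lt_or_gt with hneg | hpos
  · have : π / 4 < Real.arctan (rexp (-2 * x)) := by
      rw [← Real.arctan_one, Real.arctan_lt_arctan_iff]
      exact Real.one_lt_exp_iff.2 (by linarith)
    rw [lowerLineMomentum, Real.sign_of_neg hneg]
    constructor <;> linarith
  · have : Real.arctan (rexp (-2 * x)) < π / 4 := by
      rw [← Real.arctan_one, Real.arctan_lt_arctan_iff]
      exact Real.exp_lt_one_iff.2 (by linarith)
    rw [lowerLineMomentum, Real.sign_of_pos hpos]
    constructor <;> linarith [Real.pi_pos]

open Complex in
theorem neg_I_mul_tanh_eq_exp_lowerLineMomentum {x : ℝ} (hx : x ≠ 0) :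
    -I * tanh (x - I * π / 4) = exp (lowerLineMomentum x * I) := by
  rw [neg_I_mul_tanh_ofReal_sub_pi_div_four_mul_I, lowerLineMomentum]
  generalize Real.arctan (rexp (-2 * x)) = θ
  rcases hx.lt_or_gt with hneg | hpos
  · rw [Real.sign_of_neg hneg, show ((-π * -1 + π / 2 - 2 * θ : ℝ) : ℂ) * I
        = (-(π / 2) - 2 * θ) * I + 2 * π * I by push_cast; ring,
      Complex.exp_add, exp_two_pi_mul_I, mul_one]
  · rw [Real.sign_of_pos hpos]
    push_cast
    ring_nf

/-- The one-particle momentum `p(λ) = −i Log(−i tanh λ)` of the XX chain is real on the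
line `Im λ = −π/4` away from `x = 0`, where it equals `−π sign(x) + π/2 − 2 arctan(e^{−2x})`. -/
theorem momentum_on_lower_line :
    ∀ x : ℝ, x ≠ 0 →
      -Complex.I * Complex.log (-Complex.I *
          Complex.tanh ((x : ℂ) - Complex.I * (π : ℝ) / 4)) =
        ((-π * Real.sign x + π / 2 - 2 * Real.arctan (Real.exp (-2 * x)) : ℝ) : ℂ) := by
  intro x hx
  obtain ⟨hlo, hhi⟩ := lowerLineMomentum_mem_Ioo hx
  rw [neg_I_mul_tanh_eq_exp_lowerLineMomentum hx,
    Complex.log_exp (by simpa using hlo) (by simpa using hhi.le)]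
  show _ = ((lowerLineMomentum x : ℝ) : ℂ)
  linear_combination (-(lowerLineMomentum x : ℂ)) * Complex.I_mul_I
end

section
/- Let z₀ ∈ ℂ and 0 < r < r' be such that the closed disk of radius r' centered at z₀ is contained in the open strip {z : −π/4 < Im z < 3π/4}; let K be the circle {z : |z − z₀| = r}, K_per = ∪_{k∈ℤ}(K + ikπ), and let G : K → Mat₂(ℂ) satisfy det G(z) = 1 for all z ∈ K. Suppose Ψ₁, Ψ₂ : ℂ → Mat₂(ℂ) both satisfy: (i) each entry holomorphic on ℂ ∖ K_per; (ii) iπ-periodicity Ψᵢ(z + iπ) = Ψᵢ(z); (iii) existence of continuous boundary values Ψᵢ₊ on the closed disk {|z − z₀| ≤ r} (agreeing with Ψᵢ on the open disk) and Ψᵢ₋ on the closed annulus {r ≤ |z − z₀| ≤ r'} (agreeing with Ψᵢ on {r < |z − z₀| ≤ r'}); (iv) the jump condition Ψᵢ₋(z) = Ψᵢ₊(z)·G(z) for all z ∈ K; (v) Ψᵢ(z) → I₂ entrywise as Re z → +∞, and Ψᵢ(z) converges entrywise to some constant matrix as Re z → −∞. Then Ψ₁(z) = Ψ₂(z) for all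 z ∈ ℂ ∖ K_per; i.e., the matrix Riemann–Hilbert problem with unimodular jump matrix admits at most one solution. -/
/-!
For two solutions, `Ψ₂ * adj Ψ₁` has no jump across the circle, because
`G * adj G = det G • 1 = 1`. A periodic function that is holomorphic off the translates of the
circle and whose boundary values agree on it extends to an entire function: near the circle it is
the Cauchy integral of its outer boundary values over a larger concentric circle, which must not
meet the other translates. The extension is periodic and has limits as `Re z → ±∞`, so it is
bounded and, by Liouville, equal to its limit `1` at `+∞`. Hence `Ψ₁ * adj Ψ₁ = Ψ₂ * adj Ψ₁ = 1`,
and `Ψ₁ = Ψ₂`.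
-/

open Real Filter Metric Complex Set Function Topology

section CauchyAnnulus

variable {E : Type*} [NormedAddCommGroup E] [NormedSpace ℂ E]
  {c w : ℂ} {r R : ℝ} {f : ℂ → E}

theorem ContinuousOn.sub_inv_smul {s : Set ℂ} (hf : ContinuousOn f s) (hw : w ∉ s) :
    ContinuousOn (fun z => (z - w)⁻¹ • f z) s :=
  ((continuousOn_id.sub continuousOn_const).inv₀ fun _ hz =>
    sub_ne_zero.2 (ne_of_mem_of_not_mem hz hw)).smul hf

theorem DifferentiableOn.sub_inv_smul {s : Set ℂ} (hf : DifferentiableOn ℂ f s) (hw : w ∉ s) :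
    DifferentiableOn ℂ (fun z => (z - w)⁻¹ • f z) s :=
  ((differentiableOn_id.sub_const w).inv fun _ hz =>
    sub_ne_zero.2 (ne_of_mem_of_not_mem hz hw)).smul hf

theorem circleIntegral_sub_inv_smul_eq_zero_of_notMem_closedBall (hR : 0 ≤ R)
    (hc : ContinuousOn f (closedBall c R)) (hd : DifferentiableOn ℂ f (ball c R))
    (hw : w ∉ closedBall c R) : ∮ z in C(c, R), (z - w)⁻¹ • f z = 0 :=
  circleIntegral_eq_zero_of_differentiable_on_off_countable hR countable_empty
    (hc.sub_inv_smul hw) fun _ hz =>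
      ((hd.sub_inv_smul fun h => hw (ball_subset_closedBall h)).differentiableAt
        (isOpen_ball.mem_nhds hz.1))

theorem circleIntegral_sub_inv_smul_sub_circleIntegral_of_mem_annulus [CompleteSpace E]
    (hr : 0 < r) (hc : ContinuousOn f (closedBall c R \ ball c r))
    (hd : DifferentiableOn ℂ f (ball c R \ closedBall c r)) (hw : w ∈ ball c R \ closedBall c r) :
    (∮ z in C(c, R), (z - w)⁻¹ • f z) - (∮ z in C(c, r), (z - w)⁻¹ • f z) =
      (2 * π * I) • f w := by
  have hopen : IsOpen (ball c R \ closedBall c r) := isOpen_ball.sdiff isClosed_closedBall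
  have hwR : w ∈ ball c R := hw.1
  have hwr : w ∉ closedBall c r := hw.2
  have hrR : r < R := (not_le.1 (hwr ∘ mem_closedBall.2)).trans (mem_ball.1 hwR)
  -- `dslope f w` has no pole at `w`, so Cauchy's theorem on the annulus applies to it
  have hslope := circleIntegral_eq_of_differentiable_on_annulus_off_countable hr hrR.le
    (countable_singleton w) (f := dslope f w)
    ((continuousOn_dslope (mem_of_superset (hopen.mem_nhds hw) (sdiff_subset_sdiff
      ball_subset_closedBall ball_subset_closedBall))).2
      ⟨hc, hd.differentiableAt (hopen.mem_nhds hw)⟩)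
    fun z hz => (differentiableAt_dslope_of_ne hz.2).2
      (hd.differentiableAt (hopen.mem_nhds hz.1))
  have hsplit : ∀ ρ, 0 < ρ → w ∉ sphere c ρ → ContinuousOn f (sphere c ρ) →
      (∮ z in C(c, ρ), dslope f w z) =
        (∮ z in C(c, ρ), (z - w)⁻¹ • f z) - ∮ z in C(c, ρ), (z - w)⁻¹ • f w := by
    intro ρ hρ hwρ hfρ
    rw [← circleIntegral.integral_sub (f := fun z => (z - w)⁻¹ • f z)
      (g := fun z => (z - w)⁻¹ • f w) ((hfρ.sub_inv_smul hwρ).circleIntegrable hρ.le)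
      ((continuousOn_const.sub_inv_smul hwρ).circleIntegrable hρ.le)]
    refine circleIntegral.integral_congr hρ.le fun z hz => ?_
    rw [dslope_of_ne _ (ne_of_mem_of_not_mem hz hwρ), slope_def_module, smul_sub]
  have hfR : ContinuousOn f (sphere c R) := hc.mono fun z hz =>
    ⟨sphere_subset_closedBall hz, fun h => (mem_sphere.1 hz ▸ mem_ball.1 h).not_gt hrR⟩
  have hfr : ContinuousOn f (sphere c r) := hc.mono fun z hz =>
    ⟨sphere_subset_closedBall.trans (closedBall_subset_closedBall hrR.le) hz,
      fun h => (mem_sphere.1 hz ▸ mem_ball.1 h).false⟩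
  rw [hsplit R (hr.trans hrR) (fun h => (mem_sphere.1 h ▸ mem_ball.1 hwR).false) hfR,
    hsplit r hr (fun h => hwr (sphere_subset_closedBall h)) hfr,
    circleIntegral.integral_smul_const, circleIntegral.integral_sub_inv_of_mem_ball hwR,
    circleIntegral_sub_inv_smul_eq_zero_of_notMem_closedBall hr.le continuousOn_const
      (differentiableOn_const _) hwr, sub_zero, sub_eq_iff_eq_add] at hslope
  rw [hslope]
  abel

-- The extension is the Cauchy integral of `fm` over the outer circle.
theorem exists_differentiableOn_ball_of_eqOn_sphere [CompleteSpace E] {fp fm : ℂ → E}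
    (hr : 0 < r) (hrR : r < R)
    (hpc : ContinuousOn fp (closedBall c r)) (hpd : DifferentiableOn ℂ fp (ball c r))
    (hmc : ContinuousOn fm (closedBall c R \ ball c r))
    (hmd : DifferentiableOn ℂ fm (ball c R \ closedBall c r))
    (hjump : EqOn fp fm (sphere c r)) :
    ∃ g : ℂ → E, DifferentiableOn ℂ g (ball c R) ∧ EqOn g fp (ball c r) ∧
      EqOn g fm (ball c R \ closedBall c r) := by
  have hR : 0 < R := hr.trans hrR
  have hsphere : sphere c R ⊆ closedBall c R \ ball c r := fun z hz =>
    ⟨sphere_subset_closedBall hz, fun h => (mem_sphere.1 hz ▸ mem_ball.1 h).not_gt hrR⟩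
  have hp_eq_m : ∀ w, (∮ z in C(c, r), (z - w)⁻¹ • fm z) = ∮ z in C(c, r), (z - w)⁻¹ • fp z :=
    fun w => circleIntegral.integral_congr hr.le fun z hz => by simp only [hjump hz]
  refine ⟨fun w => (2 * π * I)⁻¹ • ∮ z in C(c, R), (z - w)⁻¹ • fm z, ?_, fun w hw => ?_,
    fun w hw => ?_⟩
  · have hcauchy := hasFPowerSeriesOn_cauchy_integral (R := ⟨R, hR.le⟩)
      ((hmc.mono hsphere).circleIntegrable hR.le) (by exact_mod_cast hR)
    exact hcauchy.differentiableOn.mono (eball_coe (x := c) (ε := ⟨R, hR.le⟩)).symm.subset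
  · have hw' : w ∉ closedBall c R \ ball c r := fun h => h.2 hw
    have hannulus := circleIntegral_eq_of_differentiable_on_annulus_off_countable hr hrR.le
      countable_empty (hmc.sub_inv_smul hw') fun z hz =>
        (hmd.sub_inv_smul fun h =>
          hw' (sdiff_subset_sdiff ball_subset_closedBall ball_subset_closedBall h)).differentiableAt
          ((isOpen_ball.sdiff isClosed_closedBall).mem_nhds hz.1)
    beta_reduce
    rw [hannulus, hp_eq_m, circleIntegral_sub_inv_smul_of_differentiable_on_off_countable
      countable_empty hw hpc fun z hz => hpd.differentiableAt (isOpen_ball.mem_nhds hz.1),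
      inv_smul_smul₀ two_pi_I_ne_zero]
  · have := circleIntegral_sub_inv_smul_sub_circleIntegral_of_mem_annulus hr hmc hmd hw
    rw [hp_eq_m, circleIntegral_sub_inv_smul_eq_zero_of_notMem_closedBall hr.le hpc hpd hw.2,
      sub_zero] at this
    simp only [this, inv_smul_smul₀ two_pi_I_ne_zero]

end CauchyAnnulus

theorem Function.Periodic.isBounded_range_of_tendsto {X : Type*} [PseudoMetricSpace X]
    {F : ℂ → X} (hF : Continuous F) {T : ℝ} (hT : 0 < T) (hper : Periodic F (T * I)) {a b : X}
    (htop : Tendsto F (comap re atTop) (𝓝 a)) (hbot : Tendsto F (comap re atBot) (𝓝 b)) :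
    Bornology.IsBounded (range F) := by
  obtain ⟨A, -, hA⟩ := (atTop_basis.comap re).mem_iff.1 (htop (ball_mem_nhds a one_pos))
  obtain ⟨B, -, hB⟩ := (atBot_basis.comap re).mem_iff.1 (hbot (ball_mem_nhds b one_pos))
  have hcover : range F ⊆ ball a 1 ∪ ball b 1 ∪ F '' (Icc B A ×ℂ Icc 0 T) := by
    rintro _ ⟨z, rfl⟩
    rcases le_or_gt A z.re with hz | hz
    · exact Or.inl (Or.inl (hA hz))
    rcases le_or_gt z.re B with hz' | hz'
    · exact Or.inl (Or.inr (hB hz'))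
    -- translate `z` vertically into the fundamental rectangle
    refine Or.inr ⟨z - toIcoDiv hT 0 z.im • (T * I), ⟨?_, ?_⟩, hper.sub_zsmul_eq _⟩
    · simpa using ⟨hz'.le, hz.le⟩
    · have := toIcoMod_mem_Ico hT 0 z.im
      rw [toIcoMod, zero_add] at this
      simpa using Ico_subset_Icc_self this
  exact ((isBounded_ball.union isBounded_ball).union
    ((isCompact_Icc.reProdIm isCompact_Icc).image hF).isBounded).subset hcover

theorem Differentiable.eq_of_periodic_of_tendsto {E : Type*} [NormedAddCommGroup E]
    [NormedSpace ℂ E] {F : ℂ → E} (hF : Differentiable ℂ F) {T : ℝ} (hT : 0 < T)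
    (hper : Periodic F (T * I)) {a b : E} (htop : Tendsto F (comap re atTop) (𝓝 a))
    (hbot : Tendsto F (comap re atBot) (𝓝 b)) (z : ℂ) : F z = a := by
  have hconst := hF.apply_eq_apply_of_bounded
    (hper.isBounded_range_of_tendsto hF.continuous hT htop hbot)
  have : (comap re atTop).NeBot := atTop_neBot.comap_of_surj re_surjective
  exact tendsto_nhds_unique (tendsto_const_nhds.congr fun w => hconst z w) htop

def verticalTranslates (K : Set ℂ) (T : ℝ) : Set ℂ :=
  ⋃ k : ℤ, (fun z => z + (k : ℂ) * T * I) '' K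

section verticalTranslates

variable {K : Set ℂ} {T : ℝ} {z : ℂ}

theorem mem_verticalTranslates : z ∈ verticalTranslates K T ↔ ∃ k : ℤ, z - k * T * I ∈ K := by
  simp only [verticalTranslates, mem_iUnion, mem_image]
  constructor
  · rintro ⟨k, w, hw, rfl⟩
    exact ⟨k, by rwa [add_sub_cancel_right]⟩
  · rintro ⟨k, hk⟩
    exact ⟨k, _, hk, sub_add_cancel _ _⟩

theorem add_mem_verticalTranslates_iff :
    z + T * I ∈ verticalTranslates K T ↔ z ∈ verticalTranslates K T := by
  simp only [mem_verticalTranslates]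
  constructor
  · rintro ⟨k, hk⟩
    exact ⟨k - 1, by convert hk using 1; push_cast; ring⟩
  · rintro ⟨k, hk⟩
    exact ⟨k + 1, by convert hk using 1; push_cast; ring⟩

theorem isClosed_verticalTranslates (hK : IsCompact K) (hT : T ≠ 0) :
    IsClosed (verticalTranslates K T) := by
  -- `verticalTranslates K T` is the preimage of a compact set under `z ↦ exp (2π z / T)`
  set φ : ℂ → ℂ := fun z => exp (2 * π * z / T)
  have hφ : verticalTranslates K T = φ ⁻¹' (φ '' K) := by
    have hT' : (T : ℂ) ≠ 0 := ofReal_ne_zero.2 hT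
    ext z
    rw [mem_verticalTranslates]
    constructor
    · rintro ⟨k, hk⟩
      refine ⟨_, hk, exp_eq_exp_iff_exists_int.2 ⟨-k, ?_⟩⟩
      field_simp
      push_cast
      ring
    · rintro ⟨w, hw, hwz⟩
      obtain ⟨n, hn⟩ := exp_eq_exp_iff_exists_int.1 hwz
      refine ⟨-n, ?_⟩
      convert hw using 1
      field_simp at hn
      push_cast
      linear_combination -hn
  rw [hφ]
  exact (hK.image (by fun_prop)).isClosed.preimage (by fun_prop)

theorem eventually_notMem_verticalTranslates (hK : Bornology.IsBounded K) :
    ∀ᶠ z in comap re atTop ⊔ comap re atBot, z ∉ verticalTranslates K T := by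
  obtain ⟨R, hR⟩ := hK.subset_closedBall 0
  have hre : ∀ z ∈ verticalTranslates K T, |z.re| ≤ R := by
    intro z hz
    obtain ⟨k, hk⟩ := mem_verticalTranslates.1 hz
    simpa using (abs_re_le_norm _).trans (mem_closedBall_zero_iff.1 (hR hk))
  refine eventually_sup.2 ⟨((eventually_gt_atTop R).comap re).mono fun z hz hmem => ?_,
    ((eventually_lt_atBot (-R)).comap re).mono fun z hz hmem => ?_⟩
  · linarith [le_abs_self z.re, hre z hmem]
  · linarith [neg_abs_le z.re, hre z hmem]

theorem eq_zero_of_mem_sphere_of_add_mem_ball {z₀ w : ℂ} {r r' : ℝ} {k : ℤ} (hT : r + r' ≤ T)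
    (hw : w ∈ sphere z₀ r) (hk : w + k * T * I ∈ ball z₀ r') : k = 0 := by
  by_contra hk0
  have hT0 : 0 ≤ T := by
    linarith [dist_nonneg.trans_eq (mem_sphere.1 hw), dist_nonneg.trans_lt (mem_ball.1 hk)]
  have h1 : T ≤ ‖(k : ℂ) * T * I‖ := by
    rw [norm_mul, norm_mul, norm_I, mul_one, norm_real, norm_of_nonneg hT0, norm_intCast]
    exact le_mul_of_one_le_left hT0 (by exact_mod_cast Int.one_le_abs hk0)
  have h2 : ‖(k : ℂ) * T * I‖ < r' + r := by
    calc ‖(k : ℂ) * T * I‖ = ‖(w + k * T * I - z₀) - (w - z₀)‖ := by ring_nf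
      _ ≤ ‖w + k * T * I - z₀‖ + ‖w - z₀‖ := norm_sub_le _ _
      _ < r' + r := by
        rw [← dist_eq_norm, ← dist_eq_norm, mem_sphere.1 hw]
        exact add_lt_add_of_lt_of_le (mem_ball.1 hk) le_rfl
  linarith

variable {E : Type*} [NormedAddCommGroup E] [NormedSpace ℂ E]

theorem exists_differentiable_periodic_extension {B : Set ℂ} {f g : ℂ → E} (hB : IsOpen B)
    (hKB : K ⊆ B) (hsep : ∀ w ∈ K, ∀ k : ℤ, w + k * T * I ∈ B → k = 0)
    (hclosed : IsClosed (verticalTranslates K T))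
    (hf : DifferentiableOn ℂ f (verticalTranslates K T)ᶜ) (hper : Periodic f (T * I))
    (hg : DifferentiableOn ℂ g B) (hgf : EqOn g f (B \ K)) :
    ∃ F : ℂ → E, Differentiable ℂ F ∧ Periodic F (T * I) ∧
      EqOn F f (verticalTranslates K T)ᶜ := by
  classical
  set S := verticalTranslates K T
  have huniq : ∀ z (k l : ℤ), z - k * T * I ∈ K → z - l * T * I ∈ B → l = k := by
    intro z k l hk hl
    have := hsep _ hk (k - l) (by convert hl using 1; push_cast; ring)
    omega
  set F : ℂ → E := fun z =>
    if h : z ∈ S then g (z - (mem_verticalTranslates.1 h).choose * T * I) else f z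
  have hF_mem : ∀ z (k : ℤ), z - k * T * I ∈ K → F z = g (z - k * T * I) := by
    intro z k hk
    have hz : z ∈ S := mem_verticalTranslates.2 ⟨k, hk⟩
    simp only [F, dif_pos hz]
    rw [huniq z _ k (mem_verticalTranslates.1 hz).choose_spec (hKB hk)]
  have hF_near : ∀ z (k : ℤ), z - k * T * I ∈ B → F z = g (z - k * T * I) := by
    intro z k hk
    by_cases hz : z ∈ S
    · obtain ⟨l, hl⟩ := mem_verticalTranslates.1 hz
      rw [hF_mem z l hl, huniq z l k hl hk]
    · have hkK : z - k * T * I ∉ K := fun h => hz (mem_verticalTranslates.2 ⟨k, h⟩)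
      simp only [F, dif_neg hz]
      rw [hgf ⟨hk, hkK⟩, mul_assoc, hper.sub_int_mul_eq]
  refine ⟨F, fun z => ?_, fun z => ?_, fun z hz => dif_neg hz⟩
  · by_cases hz : z ∈ S
    · obtain ⟨k, hk⟩ := mem_verticalTranslates.1 hz
      have hnear : ∀ᶠ y in 𝓝 z, y - k * T * I ∈ B :=
        (continuous_id.sub continuous_const).continuousAt.preimage_mem_nhds (hB.mem_nhds (hKB hk))
      exact ((hg.differentiableAt (hB.mem_nhds (hKB hk))).comp z
        (differentiableAt_id.sub_const _)).congr_of_eventuallyEq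
        (hnear.mono fun y hy => hF_near y k hy)
    · exact (hf.differentiableAt (hclosed.isOpen_compl.mem_nhds hz)).congr_of_eventuallyEq
        (Filter.mem_of_superset (hclosed.isOpen_compl.mem_nhds hz) fun y hy => dif_neg hy)
  · by_cases hz : z ∈ S
    · obtain ⟨k, hk⟩ := mem_verticalTranslates.1 hz
      have hk' : z + T * I - (k + 1 : ℤ) * T * I = z - k * T * I := by push_cast; ring
      rw [hF_mem z k hk, hF_mem _ (k + 1) (hk' ▸ hk), hk']
    · have hz' : z + T * I ∉ S := fun h => hz (add_mem_verticalTranslates_iff.1 h)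
      simp only [F, dif_neg hz, dif_neg hz']
      exact hper z

end verticalTranslates

section Cylinder

variable {E : Type*} [NormedAddCommGroup E] [NormedSpace ℂ E] {z₀ : ℂ} {r r' T : ℝ}

theorem mem_sphere_of_mem_verticalTranslates_of_mem_ball (hT : r + r' ≤ T) {z : ℂ}
    (hz : z ∈ verticalTranslates (sphere z₀ r) T) (hz' : z ∈ ball z₀ r') : z ∈ sphere z₀ r := by
  obtain ⟨k, hk⟩ := mem_verticalTranslates.1 hz
  obtain rfl : k = 0 := eq_zero_of_mem_sphere_of_add_mem_ball hT hk (by rwa [sub_add_cancel])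
  simpa using hk

theorem apply_eq_of_eqOn_sphere [CompleteSpace E] (hr : 0 < r) (hrr' : r < r') (hT : r + r' ≤ T)
    {f fp fm : ℂ → E} (hf : DifferentiableOn ℂ f (verticalTranslates (sphere z₀ r) T)ᶜ)
    (hper : Periodic f (T * I))
    (hpc : ContinuousOn fp (closedBall z₀ r)) (hp : EqOn fp f (ball z₀ r))
    (hmc : ContinuousOn fm {z | r ≤ dist z z₀ ∧ dist z z₀ ≤ r'})
    (hm : ∀ z, r < dist z z₀ → dist z z₀ < r' → fm z = f z)
    (hjump : EqOn fp fm (sphere z₀ r)) {a b : E} (htop : Tendsto f (comap re atTop) (𝓝 a))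
    (hbot : Tendsto f (comap re atBot) (𝓝 b)) :
    ∀ z ∉ verticalTranslates (sphere z₀ r) T, f z = a := by
  set S := verticalTranslates (sphere z₀ r) T
  have hT0 : 0 < T := by linarith
  have hinner : ball z₀ r ⊆ Sᶜ := fun z hz hzS =>
    (mem_ball.1 hz).ne (mem_sphere.1 (mem_sphere_of_mem_verticalTranslates_of_mem_ball hT hzS
      (ball_subset_ball hrr'.le hz)))
  have houter : ball z₀ r' \ closedBall z₀ r ⊆ Sᶜ := fun z hz hzS =>
    hz.2 (sphere_subset_closedBall (mem_sphere_of_mem_verticalTranslates_of_mem_ball hT hzS hz.1))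
  have hmeq : EqOn fm f (ball z₀ r' \ closedBall z₀ r) := fun z hz =>
    hm z (not_le.1 fun h => hz.2 (mem_closedBall.2 h)) (mem_ball.1 hz.1)
  obtain ⟨g, hg, hgp, hgm⟩ := exists_differentiableOn_ball_of_eqOn_sphere hr hrr' hpc
    ((hf.mono hinner).congr hp)
    (hmc.mono fun z hz => ⟨not_lt.1 fun h => hz.2 (mem_ball.2 h), mem_closedBall.1 hz.1⟩)
    ((hf.mono houter).congr hmeq) hjump
  have hgf : EqOn g f (ball z₀ r' \ sphere z₀ r) := by
    rintro z ⟨hz, hzr⟩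
    rcases lt_or_gt_of_ne (mt mem_sphere.2 hzr) with h | h
    · exact (hgp (mem_ball.2 h)).trans (hp (mem_ball.2 h))
    · have hz' : z ∈ ball z₀ r' \ closedBall z₀ r := ⟨hz, fun h' => h.not_ge (mem_closedBall.1 h')⟩
      exact (hgm hz').trans (hmeq hz')
  obtain ⟨F, hF, hFper, hFf⟩ := exists_differentiable_periodic_extension isOpen_ball
    (sphere_subset_ball hrr') (fun w hw k hk => eq_zero_of_mem_sphere_of_add_mem_ball hT hw hk)
    (isClosed_verticalTranslates (isCompact_sphere z₀ r) hT0.ne') hf hper hg hgf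
  have hev : f =ᶠ[comap re atTop ⊔ comap re atBot] F :=
    (eventually_notMem_verticalTranslates isBounded_sphere).mono fun z hz => (hFf hz).symm
  intro z hz
  rw [← hFf hz]
  exact hF.eq_of_periodic_of_tendsto hT0 hFper (htop.congr' (hev.filter_mono le_sup_left))
    (hbot.congr' (hev.filter_mono le_sup_right)) z

end Cylinder

section MatrixEntries

variable {𝕜 : Type*} [NontriviallyNormedField 𝕜] {n : Type*} [Fintype n]
  {s : Set 𝕜} {A B : 𝕜 → Matrix n n 𝕜}

theorem differentiableOn_det_of_entries [DecidableEq n]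
    (hA : ∀ i j, DifferentiableOn 𝕜 (fun z => A z i j) s) :
    DifferentiableOn 𝕜 (fun z => (A z).det) s := by
  simp only [Matrix.det_apply']
  exact DifferentiableOn.fun_sum fun σ _ =>
    (differentiableOn_const _).mul (DifferentiableOn.fun_finsetProd fun i _ => hA _ _)

theorem differentiableOn_adjugate_apply_of_entries [DecidableEq n]
    (hA : ∀ i j, DifferentiableOn 𝕜 (fun z => A z i j) s) (i j : n) :
    DifferentiableOn 𝕜 (fun z => (A z).adjugate i j) s := by
  simp only [Matrix.adjugate_apply]
  refine differentiableOn_det_of_entries fun k l => ?_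
  simp only [Matrix.updateRow_apply]
  split_ifs
  · exact differentiableOn_const _
  · exact hA k l

theorem differentiableOn_mul_apply_of_entries
    (hA : ∀ i j, DifferentiableOn 𝕜 (fun z => A z i j) s)
    (hB : ∀ i j, DifferentiableOn 𝕜 (fun z => B z i j) s) (i j : n) :
    DifferentiableOn 𝕜 (fun z => (A z * B z) i j) s := by
  simp only [Matrix.mul_apply]
  exact DifferentiableOn.fun_sum fun l _ => (hA i l).mul (hB l j)

end MatrixEntries

theorem two_mul_lt_sub_of_closedBall_subset {z₀ : ℂ} {R a b : ℝ} (hR : 0 ≤ R)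
    (h : closedBall z₀ R ⊆ {z : ℂ | a < z.im ∧ z.im < b}) : 2 * R < b - a := by
  have hup := (h (a := z₀ + R * I) (by simp [abs_of_nonneg hR])).2
  have hdown := (h (a := z₀ - R * I) (by simp [abs_of_nonneg hR])).1
  simp only [add_im, sub_im, mul_im, ofReal_re, ofReal_im, I_re, I_im, mul_zero, mul_one,
    add_zero] at hup hdown
  linarith

section MatrixRHP

variable {z₀ : ℂ} {r r' T : ℝ} {m n : Type*}

theorem matrix_eq_of_eqOn_sphere (hr : 0 < r) (hrr' : r < r') (hT : r + r' ≤ T)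
    {Φ Φp Φm : ℂ → Matrix m n ℂ}
    (hΦ : ∀ i j, DifferentiableOn ℂ (fun z => Φ z i j) (verticalTranslates (sphere z₀ r) T)ᶜ)
    (hper : Periodic Φ (T * I))
    (hpc : ContinuousOn Φp (closedBall z₀ r)) (hp : EqOn Φp Φ (ball z₀ r))
    (hmc : ContinuousOn Φm {z | r ≤ dist z z₀ ∧ dist z z₀ ≤ r'})
    (hm : ∀ z, r < dist z z₀ → dist z z₀ < r' → Φm z = Φ z)
    (hjump : EqOn Φp Φm (sphere z₀ r)) {A B : Matrix m n ℂ}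
    (htop : Tendsto Φ (comap re atTop) (𝓝 A)) (hbot : Tendsto Φ (comap re atBot) (𝓝 B)) :
    ∀ z ∉ verticalTranslates (sphere z₀ r) T, Φ z = A := by
  intro z hz
  ext i j
  have hentry : Continuous fun M : Matrix m n ℂ => M i j := continuous_id.matrix_elem i j
  exact apply_eq_of_eqOn_sphere (f := fun z => Φ z i j) (fp := fun z => Φp z i j)
    (fm := fun z => Φm z i j) hr hrr' hT (hΦ i j) (fun z => congrArg (· i j) (hper z))
    (hentry.comp_continuousOn hpc) (fun z hz => congrArg (· i j) (hp hz))
    (hentry.comp_continuousOn hmc) (fun z h h' => congrArg (· i j) (hm z h h'))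
    (fun z hz => congrArg (· i j) (hjump hz)) (tendsto_pi_nhds.1 (tendsto_pi_nhds.1 htop i) j)
    (tendsto_pi_nhds.1 (tendsto_pi_nhds.1 hbot i) j) z hz

variable [Fintype n] [DecidableEq n]

/-- `Ψp` and `Ψm` are the boundary values of `Ψ` from inside and outside the circle; `Ψ` lives on
the cylinder `ℂ / iTℤ`. -/
structure IsCylinderRHPSolution (z₀ : ℂ) (r r' T : ℝ) (G Ψ Ψp Ψm : ℂ → Matrix n n ℂ) :
    Prop where
  differentiableOn : ∀ i j,
    DifferentiableOn ℂ (fun z => Ψ z i j) (verticalTranslates (sphere z₀ r) T)ᶜ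
  periodic : Periodic Ψ (T * I)
  continuousOn_inner : ContinuousOn Ψp (closedBall z₀ r)
  eqOn_inner : EqOn Ψp Ψ (ball z₀ r)
  continuousOn_outer : ContinuousOn Ψm {z | r ≤ dist z z₀ ∧ dist z z₀ ≤ r'}
  eq_outer : ∀ z, r < dist z z₀ → dist z z₀ < r' → Ψm z = Ψ z
  jump : ∀ z ∈ sphere z₀ r, Ψm z = Ψp z * G z
  tendsto_atTop : Tendsto Ψ (comap re atTop) (𝓝 1)
  tendsto_atBot : ∃ M, Tendsto Ψ (comap re atBot) (𝓝 M)

theorem IsCylinderRHPSolution.mul_adjugate_eq_one (hr : 0 < r) (hrr' : r < r')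
    (hT : r + r' ≤ T) {G Ψ₁ Ψ₁p Ψ₁m Ψ₂ Ψ₂p Ψ₂m : ℂ → Matrix n n ℂ}
    (h₁ : IsCylinderRHPSolution z₀ r r' T G Ψ₁ Ψ₁p Ψ₁m)
    (h₂ : IsCylinderRHPSolution z₀ r r' T G Ψ₂ Ψ₂p Ψ₂m) (hG : ∀ z ∈ sphere z₀ r, (G z).det = 1) :
    ∀ z ∉ verticalTranslates (sphere z₀ r) T, Ψ₂ z * (Ψ₁ z).adjugate = 1 := by
  have hadj : Continuous fun M : Matrix n n ℂ => M.adjugate := continuous_id.matrix_adjugate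
  have hjump : ∀ z ∈ sphere z₀ r,
      Ψ₂p z * (Ψ₁p z).adjugate = Ψ₂m z * (Ψ₁m z).adjugate := fun z hz => by
    rw [h₁.jump z hz, h₂.jump z hz, Matrix.adjugate_mul_distrib, mul_assoc, ← mul_assoc (G z),
      Matrix.mul_adjugate, hG z hz, one_smul, one_mul]
  obtain ⟨M₁, hM₁⟩ := h₁.tendsto_atBot
  obtain ⟨M₂, hM₂⟩ := h₂.tendsto_atBot
  have htop := h₂.tendsto_atTop.mul ((hadj.tendsto 1).comp h₁.tendsto_atTop)
  rw [Matrix.adjugate_one, one_mul] at htop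
  exact matrix_eq_of_eqOn_sphere (Φ := fun z => Ψ₂ z * (Ψ₁ z).adjugate)
    (Φp := fun z => Ψ₂p z * (Ψ₁p z).adjugate) (Φm := fun z => Ψ₂m z * (Ψ₁m z).adjugate) hr hrr' hT
    (fun i j => differentiableOn_mul_apply_of_entries h₂.differentiableOn
      (differentiableOn_adjugate_apply_of_entries h₁.differentiableOn) i j)
    (fun z => by simp only [h₁.periodic z, h₂.periodic z])
    (h₂.continuousOn_inner.mul (hadj.comp_continuousOn h₁.continuousOn_inner))
    (fun z hz => by simp only [h₁.eqOn_inner hz, h₂.eqOn_inner hz])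
    (h₂.continuousOn_outer.mul (hadj.comp_continuousOn h₁.continuousOn_outer))
    (fun z h h' => by simp only [h₁.eq_outer z h h', h₂.eq_outer z h h'])
    hjump htop (hM₂.mul ((hadj.tendsto M₁).comp hM₁))

end MatrixRHP

/-- The matrix Riemann–Hilbert problem on the cylinder `S = {−π/4 ≤ Im z < 3π/4}` with
unimodular jump matrix `G` on the circle `K` admits at most one solution. -/
theorem rhp_unimodular_unique (z₀ : ℂ) (r r' : ℝ) (hr : 0 < r) (hrr' : r < r')
    (hstrip : closedBall z₀ r' ⊆ {z : ℂ | -(π / 4) < z.im ∧ z.im < 3 * π / 4})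
    (K Kper : Set ℂ) (hK : K = sphere z₀ r)
    (hKper : Kper = ⋃ k : ℤ, (fun z => z + (k : ℂ) * (π : ℝ) * Complex.I) '' K)
    (G : ℂ → Matrix (Fin 2) (Fin 2) ℂ)
    (hG : ∀ z ∈ K, (G z).det = 1)
    (Ψ₁ Ψ₂ : ℂ → Matrix (Fin 2) (Fin 2) ℂ)
    (hol₁ : ∀ i j, DifferentiableOn ℂ (fun z => Ψ₁ z i j) Kperᶜ)
    (hol₂ : ∀ i j, DifferentiableOn ℂ (fun z => Ψ₂ z i j) Kperᶜ)
    (per₁ : ∀ z, Ψ₁ (z + (π : ℝ) * Complex.I) = Ψ₁ z)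
    (per₂ : ∀ z, Ψ₂ (z + (π : ℝ) * Complex.I) = Ψ₂ z)
    (Ψ₁p Ψ₁m Ψ₂p Ψ₂m : ℂ → Matrix (Fin 2) (Fin 2) ℂ)
    (hΨ₁p_cont : ContinuousOn Ψ₁p (closedBall z₀ r))
    (hΨ₁p_eq : ∀ z ∈ ball z₀ r, Ψ₁p z = Ψ₁ z)
    (hΨ₁m_cont : ContinuousOn Ψ₁m {z : ℂ | r ≤ dist z z₀ ∧ dist z z₀ ≤ r'})
    (hΨ₁m_eq : ∀ z : ℂ, r < dist z z₀ → dist z z₀ ≤ r' → Ψ₁m z = Ψ₁ z)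
    (hΨ₂p_cont : ContinuousOn Ψ₂p (closedBall z₀ r))
    (hΨ₂p_eq : ∀ z ∈ ball z₀ r, Ψ₂p z = Ψ₂ z)
    (hΨ₂m_cont : ContinuousOn Ψ₂m {z : ℂ | r ≤ dist z z₀ ∧ dist z z₀ ≤ r'})
    (hΨ₂m_eq : ∀ z : ℂ, r < dist z z₀ → dist z z₀ ≤ r' → Ψ₂m z = Ψ₂ z)
    (jump₁ : ∀ z ∈ K, Ψ₁m z = Ψ₁p z * G z)
    (jump₂ : ∀ z ∈ K, Ψ₂m z = Ψ₂p z * G z)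
    (limPlus₁ : ∀ i j, Tendsto (fun z => Ψ₁ z i j) (comap Complex.re atTop)
      (nhds ((1 : Matrix (Fin 2) (Fin 2) ℂ) i j)))
    (limPlus₂ : ∀ i j, Tendsto (fun z => Ψ₂ z i j) (comap Complex.re atTop)
      (nhds ((1 : Matrix (Fin 2) (Fin 2) ℂ) i j)))
    (limMinus₁ : ∃ M : Matrix (Fin 2) (Fin 2) ℂ, ∀ i j,
      Tendsto (fun z => Ψ₁ z i j) (comap Complex.re atBot) (nhds (M i j)))
    (limMinus₂ : ∃ M : Matrix (Fin 2) (Fin 2) ℂ, ∀ i j,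
      Tendsto (fun z => Ψ₂ z i j) (comap Complex.re atBot) (nhds (M i j))) :
    ∀ z ∉ Kper, Ψ₁ z = Ψ₂ z := by
  subst hK hKper
  have hT : r + r' ≤ π := by
    linarith [two_mul_lt_sub_of_closedBall_subset (hr.trans hrr').le hstrip]
  have sol₁ : IsCylinderRHPSolution z₀ r r' π G Ψ₁ Ψ₁p Ψ₁m :=
    ⟨hol₁, per₁, hΨ₁p_cont, hΨ₁p_eq, hΨ₁m_cont, fun z h h' => hΨ₁m_eq z h h'.le, jump₁,
      tendsto_pi_nhds.2 fun i => tendsto_pi_nhds.2 (limPlus₁ i),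
      limMinus₁.imp fun _ h => tendsto_pi_nhds.2 fun i => tendsto_pi_nhds.2 (h i)⟩
  have sol₂ : IsCylinderRHPSolution z₀ r r' π G Ψ₂ Ψ₂p Ψ₂m :=
    ⟨hol₂, per₂, hΨ₂p_cont, hΨ₂p_eq, hΨ₂m_cont, fun z h h' => hΨ₂m_eq z h h'.le, jump₂,
      tendsto_pi_nhds.2 fun i => tendsto_pi_nhds.2 (limPlus₂ i),
      limMinus₂.imp fun _ h => tendsto_pi_nhds.2 fun i => tendsto_pi_nhds.2 (h i)⟩
  intro z hz
  have h₁₁ := sol₁.mul_adjugate_eq_one hr hrr' hT sol₁ hG z hz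
  have h₁₂ := sol₁.mul_adjugate_eq_one hr hrr' hT sol₂ hG z hz
  exact (left_inv_eq_right_inv h₁₂ (mul_eq_one_comm.1 h₁₁)).symm
end
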